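/- Let A, B be real n×n matrices satisfying: (c1) A is entrywise nonnegative, (c2) B_{ij} ≤ A_{ij} for all i ≠ j, and (c3) there exists an entrywise positive vector u with (B−A)u entrywise positive. Set ρ(A,B) = μ/(1+μ) where μ = ρ((B−A)⁻¹A), and let t be a real number with 0 < t < ρ(A,B). Suppose J is a class of the digraph G(tB − A) such that ρ(A,B) = μ_J/(1+μ_J) where μ_J = ρ((B_J − A_J)⁻¹ A_J), and let m = |J|. If s is the (unique) index with tB − A ∈ L_s, then s ≤ n−1 when m = n, and s < m when m < n. -/

import Mathlib

open Matrix

/-- Spectral radius of a real matrix: supremum of the absolute values of its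
complex eigenvalues. -/
noncomputable def specRad {m : Type*} [Fintype m] [DecidableEq m] (M : Matrix m m ℝ) : ℝ :=
  sSup ((fun z : ℂ => ‖z‖) '' spectrum ℂ (M.map (algebraMap ℝ ℂ)))

/-- Principal submatrix of `A` with rows and columns indexed by `J`. -/
def subm {n : ℕ} (A : Matrix (Fin n) (Fin n) ℝ) (J : Finset (Fin n)) :
    Matrix {i // i ∈ J} {i // i ∈ J} ℝ :=
  A.submatrix Subtype.val Subtype.val

/-- `X` is an M-matrix: `X = q•I − P` with `P ≥ 0` and `q ≥ ρ(P)`. -/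
def IsMMatrix {m : Type*} [Fintype m] [DecidableEq m] (X : Matrix m m ℝ) : Prop :=
  ∃ q : ℝ, ∃ P : Matrix m m ℝ, (∀ i j, 0 ≤ P i j) ∧ X = q • 1 - P ∧ specRad P ≤ q

/-- `X` is a nonsingular M-matrix: `X = q•I − P` with `P ≥ 0` and `q > ρ(P)`. -/
def IsNonsingMMatrix {m : Type*} [Fintype m] [DecidableEq m] (X : Matrix m m ℝ) : Prop :=
  ∃ q : ℝ, ∃ P : Matrix m m ℝ, (∀ i j, 0 ≤ P i j) ∧ X = q • 1 - P ∧ specRad P < q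

/-- `ρ_s(P)`: the maximum over index sets `J` of cardinality `s` of `ρ(P_J)`. -/
noncomputable def rhoS {n : ℕ} (P : Matrix (Fin n) (Fin n) ℝ) (s : ℕ) : ℝ :=
  sSup {r : ℝ | ∃ J : Finset (Fin n), J.card = s ∧ r = specRad (subm P J)}

/-- The Fiedler–Markham class `L_s`: `X ∈ L_s` iff `X = q•I − P` with `P ≥ 0`
and `ρ_s(P) ≤ q < ρ_{s+1}(P)` (for `s = 0`, `q < ρ_1(P)`; for `s = n`,
`ρ_{n+1}(P) = ∞` so only `ρ_n(P) ≤ q`). -/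
def MemL {n : ℕ} (s : ℕ) (X : Matrix (Fin n) (Fin n) ℝ) : Prop :=
  ∃ q : ℝ, ∃ P : Matrix (Fin n) (Fin n) ℝ, (∀ i j, 0 ≤ P i j) ∧ X = q • 1 - P ∧
    (if s = 0 then q < rhoS P 1
     else rhoS P s ≤ q ∧ (s = n ∨ q < rhoS P (s + 1)))

/-- Edge relation of the digraph `G(X)` of a matrix `X`: edge `(j,k)` iff
`X_{jk} ≠ 0`. -/
def edgeRel {n : ℕ} (X : Matrix (Fin n) (Fin n) ℝ) (j k : Fin n) : Prop :=
  X j k ≠ 0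

/-- `j` has access to `k` in the digraph with edge relation `Γ`:
`j = k` or there is a directed path from `j` to `k`. -/
def Access {n : ℕ} (Γ : Fin n → Fin n → Prop) (j k : Fin n) : Prop :=
  Relation.ReflTransGen Γ j k

/-- `j` and `k` communicate: each has access to the other. -/
def Communicate {n : ℕ} (Γ : Fin n → Fin n → Prop) (j k : Fin n) : Prop :=
  Access Γ j k ∧ Access Γ k j

/-- `C` is a class of the digraph with edge relation `Γ`: an equivalence class
of the communication relation. -/
def IsClass {n : ℕ} (Γ : Fin n → Fin n → Prop) (C : Finset (Fin n)) : Prop :=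
  ∃ v : Fin n, ∀ w, w ∈ C ↔ Communicate Γ v w

/-!
Write `t • B - A = q • 1 - P` with `P ≥ 0`. Everything rests on `q < ρ(P_J)` for the class `J`:
since `ρ` is monotone on principal submatrices of `P`, this gives `q < ρ_s(P)` for every
`s ≥ |J|`, which `t • B - A ∈ L_s` excludes.

Suppose instead `ρ(P_J) ≤ q`. The Z-matrix `D = B_J - A_J` maps a positive vector to a positive
one, so `D⁻¹ ≥ 0`, and `q • 1 - P_J = t • D - (1 - t) • A_J` is a regular splitting. As `J` is a
class, `P_J` is irreducible, so approximate Perron vectors of `P_J` have uniformly comparable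
entries; testing `D⁻¹ A_J` against them gives `μ_J ≤ t / (1 - t)`, that is,
`ρ(A, B) = μ_J / (1 + μ_J) ≤ t`.
-/

open Filter Topology Pointwise

attribute [local instance] Matrix.linftyOpSeminormedAddCommGroup Matrix.linftyOpNormedRing
  Matrix.linftyOpNormedAlgebra

namespace Matrix

lemma sum_norm_le_linfty_opNorm {α : Type*} [SeminormedAddCommGroup α] {m n : Type*} [Fintype m]
    [Fintype n] (M : Matrix m n α) (i : m) : ∑ j, ‖M i j‖ ≤ ‖M‖ := by
  rw [linfty_opNorm_def]
  refine le_of_eq_of_le ?_ (NNReal.coe_le_coe.2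
    (Finset.le_sup (f := fun i => ∑ j, ‖M i j‖₊) (Finset.mem_univ i)))
  simp

variable {ι : Type*} [Fintype ι]

/-- Minimum principle: at an index `i` minimising `y / u`, with `c = y i / u i`, the vector
`y - c • u` is nonnegative and vanishes at `i`, so `(D *ᵥ y) i ≤ c * (D *ᵥ u) i` forces `0 ≤ c`. -/
lemma nonneg_of_mulVec_nonneg {D : Matrix ι ι ℝ} {u : ι → ℝ} (hZ : ∀ i j, i ≠ j → D i j ≤ 0)
    (hu : ∀ i, 0 < u i) (hDu : ∀ i, 0 < (D *ᵥ u) i) {y : ι → ℝ} (hDy : ∀ i, 0 ≤ (D *ᵥ y) i)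
    (i₀ : ι) : 0 ≤ y i₀ := by
  obtain ⟨i, -, hi⟩ :=
    Finset.exists_min_image Finset.univ (fun j => y j / u j) ⟨i₀, Finset.mem_univ _⟩
  set c := y i / u i
  have hyc : ∀ j, 0 ≤ y j - c * u j := fun j => by
    have := (le_div_iff₀ (hu j)).1 (hi j (Finset.mem_univ j)); linarith
  have hDyc : (D *ᵥ y) i - c * (D *ᵥ u) i ≤ 0 := by
    have : (D *ᵥ y) i - c * (D *ᵥ u) i = ∑ j, D i j * (y j - c * u j) := by
      simp only [mulVec, dotProduct, mul_sub, Finset.sum_sub_distrib, Finset.mul_sum]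
      congr 1; exact Finset.sum_congr rfl fun j _ => by ring
    rw [this]
    refine Finset.sum_nonpos fun j _ => ?_
    rcases eq_or_ne i j with rfl | hij
    · simp [c, div_mul_cancel₀ _ (hu i).ne']
    · exact mul_nonpos_of_nonpos_of_nonneg (hZ i j hij) (hyc j)
  have hc : 0 ≤ c := nonneg_of_mul_nonneg_right (by linarith [hDy i]) (hDu i)
  linarith [hyc i₀, mul_nonneg hc (hu i₀).le]

lemma exists_pos_mul_le_of_reflTransGen {P : Matrix ι ι ℝ} (hP : ∀ i j, 0 ≤ P i j) {γ : ℝ}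
    (hγ : 0 < γ) {i j : ι} (h : Relation.ReflTransGen (fun a b => 0 < P a b) i j) :
    ∃ c > 0, ∀ x : ι → ℝ, (∀ k, 0 ≤ x k) → (∀ k, (P *ᵥ x) k ≤ γ * x k) → c * x j ≤ x i := by
  induction h with
  | refl => exact ⟨1, one_pos, fun x _ _ => (one_mul _).le⟩
  | @tail b d _ hbd ih =>
    obtain ⟨c, hc, hcx⟩ := ih
    refine ⟨c * P b d / γ, by positivity, fun x hx hPx => ?_⟩
    have hedge : P b d * x d ≤ γ * x b := (Finset.single_le_sum
      (f := fun l => P b l * x l) (fun l _ => mul_nonneg (hP b l) (hx l)) (Finset.mem_univ d)).trans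
      (hPx b)
    calc c * P b d / γ * x d = c * (P b d * x d) / γ := by ring
      _ ≤ c * (γ * x b) / γ := by gcongr
      _ = c * x b := by field_simp
      _ ≤ x i := hcx x hx hPx

lemma exists_pos_mul_le_of_forall_reflTransGen [Nonempty ι] {P : Matrix ι ι ℝ}
    (hP : ∀ i j, 0 ≤ P i j) (hconn : ∀ i j, Relation.ReflTransGen (fun a b => 0 < P a b) i j)
    {γ : ℝ} (hγ : 0 < γ) :
    ∃ c > 0, ∀ x : ι → ℝ, (∀ k, 0 ≤ x k) → (∀ k, (P *ᵥ x) k ≤ γ * x k) →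
      ∀ i j, c * x j ≤ x i := by
  choose c hc hcx using fun i j => exists_pos_mul_le_of_reflTransGen hP hγ (hconn i j)
  refine ⟨Finset.univ.inf' Finset.univ_nonempty fun p : ι × ι => c p.1 p.2,
    (Finset.lt_inf'_iff _).2 fun p _ => hc p.1 p.2, fun x hx hPx i j => ?_⟩
  exact (mul_le_mul_of_nonneg_right (Finset.inf'_le _ (Finset.mem_univ (i, j))) (hx j)).trans
    (hcx i j x hx hPx)

variable [DecidableEq ι]

lemma isUnit_det_of_mulVec_pos {D : Matrix ι ι ℝ} {u : ι → ℝ} (hZ : ∀ i j, i ≠ j → D i j ≤ 0)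
    (hu : ∀ i, 0 < u i) (hDu : ∀ i, 0 < (D *ᵥ u) i) : IsUnit D.det := by
  refine isUnit_iff_ne_zero.2 fun h => ?_
  obtain ⟨v, hv, hDv⟩ := exists_mulVec_eq_zero_iff.2 h
  refine hv (funext fun i => le_antisymm ?_ (nonneg_of_mulVec_nonneg hZ hu hDu (by simp [hDv]) i))
  simpa using nonneg_of_mulVec_nonneg hZ hu hDu (y := -v) (by simp [mulVec_neg, hDv]) i

lemma inv_nonneg_of_mulVec_pos {D : Matrix ι ι ℝ} {u : ι → ℝ} (hZ : ∀ i j, i ≠ j → D i j ≤ 0)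
    (hu : ∀ i, 0 < u i) (hDu : ∀ i, 0 < (D *ᵥ u) i) (i j : ι) : 0 ≤ D⁻¹ i j := by
  have hD := isUnit_det_of_mulVec_pos hZ hu hDu
  have h := nonneg_of_mulVec_nonneg hZ hu hDu (y := D⁻¹ *ᵥ Pi.single j 1) (fun k => by
    rw [mulVec_mulVec, mul_nonsing_inv _ hD, one_mulVec]
    exact (Pi.single_nonneg.2 zero_le_one : (0 : ι → ℝ) ≤ Pi.single j 1) k) i
  simpa using h

lemma exists_mulVec_eq_smul_of_mem_spectrum {K : Type*} [Field K] {M : Matrix ι ι K} {z : K}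
    (hz : z ∈ spectrum K M) : ∃ v ≠ 0, M *ᵥ v = z • v := by
  rw [spectrum.mem_iff, isUnit_iff_isUnit_det, isUnit_iff_ne_zero, not_not,
    ← exists_mulVec_eq_zero_iff] at hz
  obtain ⟨v, hv, hzv⟩ := hz
  refine ⟨v, hv, ?_⟩
  rw [sub_mulVec, Algebra.algebraMap_eq_smul_one, smul_mulVec, one_mulVec, sub_eq_zero] at hzv
  exact hzv.symm

lemma mulVec_le_of_pow_mulVec_one_le {a : Matrix ι ι ℝ} {k : ℕ}
    (hk : ∀ i, (a ^ k *ᵥ 1) i ≤ 1) :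
    ∀ i, (a *ᵥ ((∑ j ∈ Finset.range k, a ^ j) *ᵥ 1)) i ≤
      ((∑ j ∈ Finset.range k, a ^ j) *ᵥ 1) i := by
  have hgeom := congrArg (· *ᵥ (1 : ι → ℝ)) (mul_neg_geom_sum a k)
  intro i
  have := congrFun hgeom i
  simp only [sub_mulVec, ← mulVec_mulVec, one_mulVec, Pi.sub_apply, Pi.one_apply] at this
  linarith [hk i]

lemma one_le_geom_sum_mulVec_one {a : Matrix ι ι ℝ} (ha : ∀ i j, 0 ≤ a i j) {k : ℕ} (hk : 1 ≤ k)
    (i : ι) : 1 ≤ ((∑ j ∈ Finset.range k, a ^ j) *ᵥ 1) i := by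
  rw [sum_mulVec, Finset.sum_apply]
  refine le_trans ?_ (Finset.single_le_sum (f := fun j => (a ^ j *ᵥ (1 : ι → ℝ)) i)
    (fun j _ => Finset.sum_nonneg fun l _ => mul_nonneg (pow_apply_nonneg ha j i l) zero_le_one)
    (Finset.mem_range.2 hk))
  simp

lemma mulVec_apply_le_submatrix_mulVec {κ : Type*} [Fintype κ] {M : Matrix ι ι ℝ}
    (hZ : ∀ i j, i ≠ j → M i j ≤ 0) {u : ι → ℝ} (hu : ∀ i, 0 ≤ u i) {f : κ → ι}
    (hf : f.Injective) (a : κ) : (M *ᵥ u) (f a) ≤ (M.submatrix f f *ᵥ (u ∘ f)) a := by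
  have hout : ∑ l ∈ (Finset.univ.map ⟨f, hf⟩)ᶜ, M (f a) l * u l ≤ 0 :=
    Finset.sum_nonpos fun l hl => mul_nonpos_of_nonpos_of_nonneg
      (hZ _ _ fun h => Finset.mem_compl.1 hl (h ▸ Finset.mem_map_of_mem _ (Finset.mem_univ a)))
      (hu l)
  calc (M *ᵥ u) (f a)
      = ∑ l ∈ (Finset.univ.map ⟨f, hf⟩)ᶜ, M (f a) l * u l
        + ∑ l ∈ Finset.univ.map ⟨f, hf⟩, M (f a) l * u l := (Finset.sum_compl_add_sum _ _).symm
    _ ≤ ∑ l ∈ Finset.univ.map ⟨f, hf⟩, M (f a) l * u l := by linarith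
    _ = (M.submatrix f f *ᵥ (u ∘ f)) a := by rw [Finset.sum_map]; rfl

section SpectralRadius

variable [Nonempty ι]

lemma norm_le_specRad {M : Matrix ι ι ℝ} {z : ℂ}
    (hz : z ∈ spectrum ℂ (M.map (algebraMap ℝ ℂ))) : ‖z‖ ≤ specRad M :=
  le_csSup ⟨_, by rintro _ ⟨w, hw, rfl⟩; exact spectrum.norm_le_norm_of_mem hw⟩ ⟨z, hz, rfl⟩

lemma specRad_nonneg (M : Matrix ι ι ℝ) : 0 ≤ specRad M :=
  have ⟨_, hz⟩ := spectrum.nonempty (M.map (algebraMap ℝ ℂ))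
  (norm_nonneg _).trans (norm_le_specRad hz)

lemma specRad_le {M : Matrix ι ι ℝ} {c : ℝ}
    (h : ∀ z ∈ spectrum ℂ (M.map (algebraMap ℝ ℂ)), ‖z‖ ≤ c) : specRad M ≤ c :=
  csSup_le ((spectrum.nonempty _).image _) (by rintro _ ⟨z, hz, rfl⟩; exact h z hz)

lemma specRad_le_of_mulVec_le {K : Matrix ι ι ℝ} (hK : ∀ i j, 0 ≤ K i j) {x : ι → ℝ}
    (hx : ∀ i, 0 < x i) {c : ℝ} (h : ∀ i, (K *ᵥ x) i ≤ c * x i) : specRad K ≤ c := by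
  refine specRad_le fun z hz => ?_
  obtain ⟨v, hv, hKv⟩ := exists_mulVec_eq_smul_of_mem_spectrum hz
  obtain ⟨i, -, hi⟩ := Finset.exists_max_image Finset.univ (fun j => ‖v j‖ / x j)
    Finset.univ_nonempty
  set r := ‖v i‖ / x i
  have hvr : ∀ j, ‖v j‖ ≤ r * x j := fun j =>
    (div_le_iff₀ (hx j)).1 (hi j (Finset.mem_univ j))
  have hvi : 0 < ‖v i‖ := by
    obtain ⟨j, hj⟩ := Function.ne_iff.1 hv
    exact (div_pos_iff_of_pos_right (hx i)).1
      ((div_pos (norm_pos_iff.2 hj) (hx j)).trans_le (hi j (Finset.mem_univ j)))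
  refine le_of_mul_le_mul_right ?_ hvi
  calc ‖z‖ * ‖v i‖ = ‖∑ j, (K i j : ℂ) * v j‖ := by
        rw [← norm_mul, ← smul_eq_mul, ← Pi.smul_apply, ← hKv]; rfl
    _ ≤ ∑ j, K i j * (r * x j) := by
        refine (norm_sum_le _ _).trans (Finset.sum_le_sum fun j _ => ?_)
        rw [norm_mul, Complex.norm_real, Real.norm_of_nonneg (hK i j)]
        exact mul_le_mul_of_nonneg_left (hvr j) (hK i j)
    _ = r * (K *ᵥ x) i := by
        simp only [mulVec, dotProduct, Finset.mul_sum]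
        exact Finset.sum_congr rfl fun j _ => by ring
    _ ≤ r * (c * x i) := mul_le_mul_of_nonneg_left (h i) (div_nonneg (norm_nonneg _) (hx i).le)
    _ = c * ‖v i‖ := by simp only [r]; field_simp [(hx i).ne']

lemma eventually_norm_pow_lt_of_specRad_lt {P : Matrix ι ι ℝ} {β : ℝ} (h : specRad P < β) :
    ∀ᶠ k in atTop, ‖(P ^ k).map (algebraMap ℝ ℂ)‖ < β ^ k := by
  have hβ : 0 < β := (specRad_nonneg P).trans_lt h
  have hρ : spectralRadius ℂ (P.map (algebraMap ℝ ℂ)) < ENNReal.ofReal β := by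
    refine (iSup₂_le fun z hz => ?_).trans_lt ((ENNReal.ofReal_lt_ofReal_iff hβ).2 h)
    rw [← ENNReal.ofReal_coe_nnreal, coe_nnnorm]
    exact ENNReal.ofReal_le_ofReal (norm_le_specRad hz)
  filter_upwards [(spectrum.pow_norm_pow_one_div_tendsto_nhds_spectralRadius _).eventually_lt_const
    hρ, eventually_ge_atTop 1] with k hk hk1
  rw [ENNReal.ofReal_lt_ofReal_iff hβ, one_div, Real.rpow_inv_lt_iff_of_pos (norm_nonneg _) hβ.le
    (by positivity), Real.rpow_natCast] at hk
  rwa [Matrix.map_pow]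

/-- The vector is the truncated Neumann series `∑_{j<k} (P/β)^j 1` of `(1 - P/β)⁻¹ 1`, where
Gelfand's formula provides a `k` with `(P/β)^k 1 ≤ 1`. -/
lemma exists_pos_mulVec_le_of_specRad_lt {P : Matrix ι ι ℝ} (hP : ∀ i j, 0 ≤ P i j) {β : ℝ}
    (h : specRad P < β) : ∃ x : ι → ℝ, (∀ i, 0 < x i) ∧ ∀ i, (P *ᵥ x) i ≤ β * x i := by
  have hβ : 0 < β := (specRad_nonneg P).trans_lt h
  obtain ⟨k, hk, hk1⟩ :=
    ((eventually_norm_pow_lt_of_specRad_lt h).and (eventually_ge_atTop 1)).exists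
  set a := β⁻¹ • P
  have ha : ∀ i j, 0 ≤ a i j := fun i j => mul_nonneg (inv_nonneg.2 hβ.le) (hP i j)
  have hak : ∀ i, (a ^ k *ᵥ 1) i ≤ 1 := by
    intro i
    rw [smul_pow, smul_mulVec, Pi.smul_apply, smul_eq_mul, inv_pow,
      inv_mul_le_one₀ (pow_pos hβ k)]
    calc (P ^ k *ᵥ 1) i = ∑ j, ‖((P ^ k).map (algebraMap ℝ ℂ)) i j‖ := by
          simp [mulVec, dotProduct, abs_of_nonneg (pow_apply_nonneg hP k i _)]
      _ ≤ β ^ k := (sum_norm_le_linfty_opNorm _ i).trans hk.le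
  refine ⟨_, fun i => one_pos.trans_le (one_le_geom_sum_mulVec_one ha hk1 i), fun i => ?_⟩
  rw [show P = β • a by simp [a, smul_smul, hβ.ne'], smul_mulVec, Pi.smul_apply, smul_eq_mul]
  exact mul_le_mul_of_nonneg_left (mulVec_le_of_pow_mulVec_one_le hak i) hβ.le

lemma specRad_smul (M : Matrix ι ι ℝ) {c : ℝ} (hc : 0 ≤ c) :
    specRad (c • M) = c * specRad M := by
  have hmap : (c • M).map (algebraMap ℝ ℂ) = (c : ℂ) • M.map (algebraMap ℝ ℂ) := by
    ext i j; simp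
  have himage : (‖·‖) '' ((c : ℂ) • spectrum ℂ (M.map (algebraMap ℝ ℂ))) =
      c • ((‖·‖) '' spectrum ℂ (M.map (algebraMap ℝ ℂ))) := by
    rw [← Set.image_smul, ← Set.image_smul, Set.image_image, Set.image_image]
    simp [Complex.norm_real, abs_of_nonneg hc]
  rw [specRad, hmap, spectrum.smul_eq_smul _ _ (spectrum.nonempty _), himage,
    Real.sSup_smul_of_nonneg hc, smul_eq_mul, specRad]

end SpectralRadius

lemma specRad_submatrix_le {κ : Type*} [Fintype κ] [DecidableEq κ] [Nonempty κ]
    {P : Matrix ι ι ℝ} (hP : ∀ i j, 0 ≤ P i j) {f : κ → ι} (hf : f.Injective) :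
    specRad (P.submatrix f f) ≤ specRad P := by
  have : Nonempty ι := ⟨f (Classical.arbitrary κ)⟩
  refine le_of_forall_gt_imp_ge_of_dense fun β hβ => ?_
  obtain ⟨x, hx, hPx⟩ := exists_pos_mulVec_le_of_specRad_lt hP hβ
  refine specRad_le_of_mulVec_le (fun i j => hP _ _) (fun i => hx (f i)) fun i => ?_
  calc (P.submatrix f f *ᵥ (x ∘ f)) i = ∑ l ∈ Finset.univ.map ⟨f, hf⟩, P (f i) l * x l := by
        rw [Finset.sum_map]; rfl
    _ ≤ (P *ᵥ x) (f i) :=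
        Finset.sum_le_univ_sum_of_nonneg fun l => mul_nonneg (hP _ _) (hx l).le
    _ ≤ β * x (f i) := hPx (f i)

/-- For `η > 0` there is `x > 0` with `P *ᵥ x ≤ (q + η) • x`; strong connectivity makes the entries
of `x` comparable uniformly in `η`, so that `(G * R) *ᵥ x ≤ (1 + O(η)) • x`. -/
lemma specRad_mul_le_one_of_regular_splitting [Nonempty ι] {P T R G : Matrix ι ι ℝ} {q : ℝ}
    (hP : ∀ i j, 0 ≤ P i j) (hconn : ∀ i j, Relation.ReflTransGen (fun a b => 0 < P a b) i j)
    (hPq : specRad P ≤ q) (hsplit : q • 1 - P = T - R) (hR : ∀ i j, 0 ≤ R i j)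
    (hG : ∀ i j, 0 ≤ G i j) (hGT : G * T = 1) : specRad (G * R) ≤ 1 := by
  have hq : 0 ≤ q := (specRad_nonneg P).trans hPq
  obtain ⟨c, hc, hcx⟩ :=
    exists_pos_mul_le_of_forall_reflTransGen hP hconn (by linarith : 0 < q + 1)
  set σ := ∑ i, ∑ j, G i j
  have hGR : ∀ i j, 0 ≤ (G * R) i j := fun i j =>
    Finset.sum_nonneg fun l _ => mul_nonneg (hG i l) (hR l j)
  have hbound : ∀ η, 0 < η → η ≤ 1 → specRad (G * R) ≤ 1 + η * (σ / c) := by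
    intro η hη hη1
    obtain ⟨x, hx, hPx⟩ :=
      exists_pos_mulVec_le_of_specRad_lt hP (by linarith : specRad P < q + η)
    have hxc := hcx x (fun k => (hx k).le) fun k => (hPx k).trans (by nlinarith [hx k])
    refine specRad_le_of_mulVec_le hGR hx fun i => ?_
    have hRx : (G * R) *ᵥ x = x + G *ᵥ (P *ᵥ x - q • x) := by
      rw [show R = T - (q • 1 - P) by rw [hsplit]; abel, mul_sub, sub_mulVec, hGT, one_mulVec,
        ← mulVec_mulVec, sub_mulVec, smul_mulVec, one_mulVec, ← neg_sub (P *ᵥ x), mulVec_neg,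
        sub_neg_eq_add]
    have hGi : ∑ j, G i j ≤ σ := Finset.single_le_sum (f := fun i => ∑ j, G i j)
      (fun i _ => Finset.sum_nonneg fun j _ => hG i j) (Finset.mem_univ i)
    calc ((G * R) *ᵥ x) i = x i + ∑ j, G i j * ((P *ᵥ x) j - q * x j) := by
          rw [hRx]; rfl
      _ ≤ x i + ∑ j, G i j * (η * (x i / c)) := by
          gcongr with j
          · exact hG i j
          · have hxji : x j ≤ x i / c := (le_div_iff₀ hc).2 (by linarith [hxc i j])
            nlinarith [hPx j]
      _ = x i + (∑ j, G i j) * η * (x i / c) := by rw [← Finset.sum_mul]; ring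
      _ ≤ x i + σ * η * (x i / c) := by gcongr; exact (div_pos (hx i) hc).le
      _ = (1 + η * (σ / c)) * x i := by ring
  refine ge_of_tendsto ?_ (Filter.mem_of_superset (Ioc_mem_nhdsGT zero_lt_one)
    fun η hη => hbound η hη.1 hη.2)
  have : Tendsto (fun η : ℝ => 1 + η * (σ / c)) (𝓝 0) (𝓝 1) :=
    (continuous_const.add (continuous_id.mul continuous_const) :
      Continuous fun η : ℝ => 1 + η * (σ / c)).tendsto' 0 1 (by simp)
  exact this.mono_left nhdsWithin_le_nhds

end Matrix

lemma IsClass.reflTransGen {n : ℕ} {Γ : Fin n → Fin n → Prop} {C : Finset (Fin n)}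
    (hC : IsClass Γ C) (a b : C) : Relation.ReflTransGen (fun x y : C => Γ x y) a b := by
  obtain ⟨v, hv⟩ := hC
  simp only [Communicate, Access] at hv
  suffices ∀ c, Relation.ReflTransGen Γ a c → ∀ hc : c ∈ C,
      Relation.ReflTransGen (fun x y : C => Γ x y) a ⟨c, hc⟩ from
    this b (((hv a).1 a.2).2.trans ((hv b).1 b.2).1) b.2
  intro c hac
  induction hac with
  | refl => exact fun _ => .refl
  | @tail c d hac hcd ih =>
    intro hd
    have hc : c ∈ C := (hv c).2
      ⟨((hv a).1 a.2).1.trans hac, (Relation.ReflTransGen.single hcd).trans ((hv d).1 hd).2⟩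
    exact (ih hc).tail hcd

lemma IsClass.nonempty {n : ℕ} {Γ : Fin n → Fin n → Prop} {C : Finset (Fin n)}
    (hC : IsClass Γ C) : C.Nonempty :=
  have ⟨v, hv⟩ := hC
  ⟨v, (hv v).2 ⟨.refl, .refl⟩⟩

lemma IsClass.reflTransGen_subm_pos {n : ℕ} {X P : Matrix (Fin n) (Fin n) ℝ} {q : ℝ}
    {J : Finset (Fin n)} (hJ : IsClass (edgeRel X) J) (hP : ∀ i j, 0 ≤ P i j)
    (hX : X = q • 1 - P) (a b : J) : Relation.ReflTransGen (fun a b => 0 < subm P J a b) a b := by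
  refine Relation.ReflTransGen.lift' id (fun x y hxy => ?_) a b (hJ.reflTransGen a b)
  rcases eq_or_ne x y with rfl | hne
  · exact .refl
  · refine .single (lt_of_le_of_ne (hP _ _) fun h => hxy ?_)
    simp only [hX, Matrix.sub_apply, Matrix.smul_apply,
      one_apply_ne (Subtype.val_injective.ne hne)]
    simpa [subm] using h.symm

lemma subm_sub_mulVec_pos {n : ℕ} {A B : Matrix (Fin n) (Fin n) ℝ}
    (hBA : ∀ i j, i ≠ j → B i j ≤ A i j) {u : Fin n → ℝ} (hu : ∀ i, 0 < u i)
    (hBAu : ∀ i, 0 < ((B - A) *ᵥ u) i) (J : Finset (Fin n)) (a : J) :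
    0 < ((subm B J - subm A J) *ᵥ fun i => u i) a :=
  (hBAu a).trans_le (Matrix.mulVec_apply_le_submatrix_mulVec
    (fun i j hij => sub_nonpos.2 (hBA i j hij)) (fun i => (hu i).le) Subtype.val_injective a)

lemma lt_specRad_subm_of_isClass {n : ℕ} {A B P : Matrix (Fin n) (Fin n) ℝ} {u : Fin n → ℝ}
    {J : Finset (Fin n)} {t q : ℝ} (hA : ∀ i j, 0 ≤ A i j) (hBA : ∀ i j, i ≠ j → B i j ≤ A i j)
    (hu : ∀ i, 0 < u i) (hBAu : ∀ i, 0 < ((B - A) *ᵥ u) i) (ht : 0 < t)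
    (htJ : t * (1 + specRad ((subm B J - subm A J)⁻¹ * subm A J)) <
      specRad ((subm B J - subm A J)⁻¹ * subm A J))
    (hJ : IsClass (edgeRel (t • B - A)) J) (hP : ∀ i j, 0 ≤ P i j)
    (hX : t • B - A = q • 1 - P) : q < specRad (subm P J) := by
  have : Nonempty J := hJ.nonempty.to_subtype
  set D := subm B J - subm A J
  set μ := specRad (D⁻¹ * subm A J)
  have hZ : ∀ a b, a ≠ b → D a b ≤ 0 := fun a b hab =>
    sub_nonpos.2 (hBA a b (Subtype.val_injective.ne hab))
  have hDu := subm_sub_mulVec_pos hBA hu hBAu J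
  have hDdet := Matrix.isUnit_det_of_mulVec_pos hZ (fun a => hu a) hDu
  have ht1 : t < 1 := by nlinarith [Matrix.specRad_nonneg (D⁻¹ * subm A J)]
  have hsplit : q • 1 - subm P J = t • D - (1 - t) • subm A J := by
    ext a b
    have h := congrFun₂ hX a b
    simp only [D, subm, Matrix.sub_apply, Matrix.smul_apply, submatrix_apply, one_apply,
      Subtype.ext_iff, smul_eq_mul] at h ⊢
    linarith
  by_contra! hPq
  have hGR := Matrix.specRad_mul_le_one_of_regular_splitting (G := t⁻¹ • D⁻¹)
    (fun a b => hP _ _) (hJ.reflTransGen_subm_pos hP hX) hPq hsplit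
    (fun a b => mul_nonneg (by linarith) (hA _ _))
    (fun a b => mul_nonneg (inv_nonneg.2 ht.le)
      (Matrix.inv_nonneg_of_mulVec_pos hZ (fun a => hu a) hDu a b))
    (by rw [smul_mul_smul_comm, inv_mul_cancel₀ ht.ne', one_smul, nonsing_inv_mul _ hDdet])
  rw [smul_mul_smul_comm, Matrix.specRad_smul _ (by positivity)] at hGR
  have : (1 - t) * μ ≤ t := by
    rwa [inv_mul_eq_div, div_mul_eq_mul_div, div_le_one ht] at hGR
  nlinarith

lemma rhoS_eq_zero_of_lt {n s : ℕ} (P : Matrix (Fin n) (Fin n) ℝ) (hs : n < s) :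
    rhoS P s = 0 := by
  rw [rhoS, ← Real.sSup_empty]
  congr
  refine Set.eq_empty_of_forall_notMem ?_
  rintro r ⟨J, hJ, -⟩
  have := J.card_le_univ
  simp only [Fintype.card_fin] at this
  omega

lemma specRad_subm_le_rhoS {n : ℕ} (P : Matrix (Fin n) (Fin n) ℝ) (J : Finset (Fin n)) :
    specRad (subm P J) ≤ rhoS P J.card :=
  le_csSup ((Set.finite_range fun J : Finset (Fin n) => specRad (subm P J)).subset
    (by rintro _ ⟨J, -, rfl⟩; exact ⟨J, rfl⟩)).bddAbove ⟨J, rfl, rfl⟩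

lemma specRad_subm_le_of_subset {n : ℕ} {P : Matrix (Fin n) (Fin n) ℝ} (hP : ∀ i j, 0 ≤ P i j)
    {J J' : Finset (Fin n)} (hJ : J.Nonempty) (h : J ⊆ J') :
    specRad (subm P J) ≤ specRad (subm P J') := by
  have : Nonempty J := hJ.to_subtype
  exact Matrix.specRad_submatrix_le (P := subm P J') (fun _ _ => hP _ _)
    (f := fun a : J => (⟨a, h a.2⟩ : J')) fun a b hab => Subtype.ext (congrArg Subtype.val hab :)

-- For `s > n` both `ρ_s(P)` and `ρ_{s+1}(P)` are `sSup ∅ = 0`, which would force `0 ≤ q < 0`.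
lemma MemL.le {n s : ℕ} {X : Matrix (Fin n) (Fin n) ℝ} (hs : MemL s X) : s ≤ n := by
  obtain ⟨q, P, -, -, hcond⟩ := hs
  by_contra! hns
  rw [if_neg (by omega), rhoS_eq_zero_of_lt P hns, rhoS_eq_zero_of_lt P (by omega)] at hcond
  obtain ⟨h0, rfl | hq⟩ := hcond
  · omega
  · linarith

lemma MemL.lt_card {n s : ℕ} {X : Matrix (Fin n) (Fin n) ℝ} (hs : MemL s X)
    {J : Finset (Fin n)} (hJ : J.Nonempty)
    (h : ∀ q P, (∀ i j, 0 ≤ P i j) → X = q • 1 - P → q < specRad (subm P J)) : s < J.card := by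
  have hsn := hs.le
  obtain ⟨q, P, hP, hX, hcond⟩ := hs
  by_contra! hJs
  obtain ⟨J', hJJ', -, rfl⟩ := Finset.exists_subsuperset_card_eq J.subset_univ hJs
    (by simpa using hsn)
  rw [if_neg (hJ.card_pos.trans_le hJs).ne'] at hcond
  linarith [h q P hP hX, specRad_subm_le_of_subset hP hJ hJJ', specRad_subm_le_rhoS P J', hcond.1]

theorem stmt_14_general {n : ℕ} (A B : Matrix (Fin n) (Fin n) ℝ)
    (hc1 : ∀ i j, 0 ≤ A i j)
    (hc2 : ∀ i j, i ≠ j → B i j ≤ A i j)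
    (hc3 : ∃ u : Fin n → ℝ, (∀ i, 0 < u i) ∧ ∀ i, 0 < (B - A).mulVec u i)
    (ρAB : ℝ)
    (t : ℝ) (ht0 : 0 < t) (ht1 : t < ρAB)
    (J : Finset (Fin n)) (hJ : IsClass (edgeRel (t • B - A)) J)
    (μJ : ℝ) (hμJ : μJ = specRad ((subm B J - subm A J)⁻¹ * subm A J))
    (hρJ : ρAB = μJ / (1 + μJ))
    (m s : ℕ) (hm : m = J.card) (hs : MemL s (t • B - A)) :
    (m = n → s ≤ n - 1) ∧ (m < n → s < m) := by
  obtain ⟨u, hu, hBAu⟩ := hc3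
  have : Nonempty J := hJ.nonempty.to_subtype
  have hμJ0 : 0 ≤ μJ := hμJ ▸ Matrix.specRad_nonneg _
  have htJ : t * (1 + μJ) < μJ := (lt_div_iff₀ (by linarith)).1 (hρJ ▸ ht1)
  have hsm : s < m := hm ▸ hs.lt_card hJ.nonempty fun q P hP hX =>
    lt_specRad_subm_of_isClass hc1 hc2 hu hBAu ht0 (hμJ ▸ htJ) hJ hP hX
  omega

/-- If `0 < t < ρ(A,B)` and `J` is a class of `G(tB − A)` with
`ρ(A,B) = μ_J/(1+μ_J)` where `μ_J = ρ((B_J − A_J)⁻¹A_J)` and `m = |J|`, then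
the index `s` with `tB − A ∈ L_s` satisfies `s ≤ n−1` if `m = n`, and `s < m`
if `m < n`. -/
theorem stmt_14 {n : ℕ} (A B : Matrix (Fin n) (Fin n) ℝ)
    (hc1 : ∀ i j, 0 ≤ A i j)
    (hc2 : ∀ i j, i ≠ j → B i j ≤ A i j)
    (hc3 : ∃ u : Fin n → ℝ, (∀ i, 0 < u i) ∧ ∀ i, 0 < (B - A).mulVec u i)
    (μ ρAB : ℝ) (hμ : μ = specRad ((B - A)⁻¹ * A)) (hρ : ρAB = μ / (1 + μ))
    (t : ℝ) (ht0 : 0 < t) (ht1 : t < ρAB)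
    (J : Finset (Fin n)) (hJ : IsClass (edgeRel (t • B - A)) J)
    (μJ : ℝ) (hμJ : μJ = specRad ((subm B J - subm A J)⁻¹ * subm A J))
    (hρJ : ρAB = μJ / (1 + μJ))
    (m s : ℕ) (hm : m = J.card) (hs : MemL s (t • B - A)) :
    (m = n → s ≤ n - 1) ∧ (m < n → s < m) :=
  stmt_14_general A B hc1 hc2 hc3 ρAB t ht0 ht1 J hJ μJ hμJ hρJ m s hm hs
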